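/- arXiv:2511.13014 — 2 statements merged into one kernel-verified Lean document; each statement's English description precedes it below -/
import Mathlib

section
/- Let U be a proper prefix of a palindrome V (so |U| < |V|). Then |V| − |U| is the smallest period of V if and only if U is the longest palindromic proper prefix of V, i.e., U is a palindrome and no palindromic prefix U' of V satisfies |U| < |U'| < |V|. -/
/-- A positive integer `p` is a period of `L` if `L[i] = L[i+p]` for all `i ∈ [0, |L| - p)`. -/
def HasPeriod (L : List ℕ) (p : ℕ) : Prop :=
  0 < p ∧ ∀ i, i + p < L.length → L[i]! = L[i + p]!

lemma pal_iff (L : List ℕ) :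
    L.reverse = L ↔ ∀ i, i < L.length → L[i]! = L[L.length - 1 - i]! := by
  constructor
  · intro h i hi
    rw [getElem!_pos L i hi, getElem!_pos L (L.length - 1 - i) (by omega)]
    have h2 : L.reverse[i]'(by simpa) = L[i] := List.getElem_of_eq h _
    rw [← h2]
    exact L.getElem_reverse (by simpa)
  · intro h
    apply List.ext_getElem (by simp)
    intro i h1 h2
    rw [L.getElem_reverse h1]
    have := h (L.length - 1 - i) (by omega)
    rw [getElem!_pos, getElem!_pos] at this
    · rw [this]; congr 1; omega
    all_goals omega

lemma key (U V : List ℕ) (hpre : U <+: V) (hlt : U.length < V.length)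
    (hV : V.reverse = V) :
    HasPeriod V (V.length - U.length) ↔ U.reverse = U := by
  have hVpal := (pal_iff V).mp hV
  have hU : ∀ i, i < U.length → U[i]! = V[i]! := by
    intro i hi
    rw [getElem!_pos U i hi, getElem!_pos V i (by omega)]
    exact hpre.getElem hi
  constructor
  · rintro ⟨-, hp⟩
    rw [pal_iff]
    intro i hi
    rw [hU i hi, hU (U.length - 1 - i) (by omega)]
    have h1 := hp i (by omega)
    have h2 := hVpal (i + (V.length - U.length)) (by omega)
    rw [h1, h2]
    congr 1
    omega
  · intro hUp
    refine ⟨by omega, fun i hi => ?_⟩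
    have hiU : i < U.length := by omega
    have h1 := (pal_iff U).mp hUp i hiU
    have h2 := hVpal (i + (V.length - U.length)) (by omega)
    rw [← hU i hiU, h1, hU (U.length - 1 - i) (by omega), h2]
    congr 1
    omega

/-- Let `U` be a proper prefix of a palindrome `V` (so `|U| < |V|`).
Then `|V| - |U|` is the smallest period of `V` if and only if `U` is the longest palindromic
proper prefix of `V`, i.e., `U` is a palindrome and no palindromic prefix `U'` of `V`
satisfies `|U| < |U'| < |V|`. -/
theorem stmt1 (U V : List ℕ) (hpre : U <+: V) (hlt : U.length < V.length)
    (hV : V.reverse = V) :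
    (HasPeriod V (V.length - U.length) ∧
      ∀ q, HasPeriod V q → V.length - U.length ≤ q) ↔
    (U.reverse = U ∧
      ∀ U', U' <+: V → U'.reverse = U' →
        ¬ (U.length < U'.length ∧ U'.length < V.length)) := by
  constructor
  · rintro ⟨hp, hmin⟩
    refine ⟨(key U V hpre hlt hV).mp hp, ?_⟩
    rintro U' hpre' hpal' ⟨h1, h2⟩
    have := hmin (V.length - U'.length) ((key U' V hpre' h2 hV).mpr hpal')
    omega
  · rintro ⟨hUp, hmax⟩
    refine ⟨(key U V hpre hlt hV).mpr hUp, ?_⟩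
    intro q hq
    by_contra hc
    push_neg at hc
    have hq0 := hq.1
    set U' := V.take (V.length - q) with hU'
    have hpre' : U' <+: V := V.take_prefix _
    have hlen : U'.length = V.length - q := by
      simp [hU']
    have hpal' : U'.reverse = U' := by
      apply (key U' V hpre' (by omega) hV).mp
      rw [hlen]
      have : V.length - (V.length - q) = q := by omega
      rw [this]
      exact hq
    exact hmax U' hpre' hpal' (by omega)
end

section
/- Let S be a string of length n and let S[l..r] be a fragment with period p ≤ r − l + 1 that is maximally periodic, i.e., l = 0 or S[l−1] ≠ S[l−1+p], and r = n−1 or S[r+1] ≠ S[r+1−p]. Let P = S[x..y] be a palindromic fragment with period p satisfying l ≤ x and y ≤ r and p < y − x + 1. If x − l ≠ r − y, then the maximal palindrome of S with center (x+y)/2 has length (y − x + 1) + 2·min(x − l, r − y). -/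
/-- The fragment `S[i..j]` of a string (inclusive endpoints). -/
def Frag (S : List ℕ) (i j : ℕ) : List ℕ := (S.take (j + 1)).drop i

/-- `S[i..j]` is a palindromic fragment of `S`. -/
def IsPalFrag (S : List ℕ) (i j : ℕ) : Prop :=
  i ≤ j ∧ j < S.length ∧ (Frag S i j).reverse = Frag S i j

/-- `S[i..j]` is a maximal palindrome: it is a palindromic fragment and there is no longer
palindromic fragment of `S` with the same center `(i+j)/2`. -/
def IsMaxPal (S : List ℕ) (i j : ℕ) : Prop :=
  IsPalFrag S i j ∧ ∀ i' j', i' + j' = i + j → i' < i → ¬ IsPalFrag S i' j'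

lemma frag_length {S : List ℕ} {i j : ℕ} (hj : j < S.length) :
    (Frag S i j).length = j + 1 - i := by
  simp [Frag]; omega

lemma frag_get {S : List ℕ} {i j k : ℕ} (hj : j < S.length) (hk : k < j + 1 - i) :
    (Frag S i j)[k]! = S[i + k]! := by
  have h1 : k < (Frag S i j).length := by rw [frag_length hj]; omega
  have h2 : i + k < S.length := by omega
  rw [getElem!_pos (Frag S i j) k h1, getElem!_pos S (i+k) h2]
  simp only [Frag, List.getElem_drop, List.getElem_take]

lemma run_step {S : List ℕ} {l r p : ℕ} (hr : r < S.length)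
    (hper : HasPeriod (Frag S l r) p) {a : ℕ} (ha : l ≤ a) (hap : a + p ≤ r) :
    S[a]! = S[a + p]! := by
  have hp := hper.1
  have h := hper.2 (a - l) (by rw [frag_length hr]; omega)
  rw [frag_get hr (by omega), frag_get hr (by omega)] at h
  have e1 : l + (a - l) = a := by omega
  have e2 : l + (a - l + p) = a + p := by omega
  rw [e1, e2] at h
  exact h

lemma run_cong_le {S : List ℕ} {l r p : ℕ} (hr : r < S.length)
    (hper : HasPeriod (Frag S l r) p) {a b : ℕ} (hla : l ≤ a) (hab : a ≤ b)
    (hbr : b ≤ r) (hmod : a ≡ b [MOD p]) : S[a]! = S[b]! := by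
  obtain ⟨k, hk⟩ := (Nat.modEq_iff_dvd' hab).mp hmod
  have hp := hper.1
  clear hmod
  induction k generalizing a with
  | zero =>
    simp only [Nat.mul_zero] at hk
    obtain rfl : a = b := by omega
    rfl
  | succ n ih =>
    have hmul : p * (n + 1) = p * n + p := by ring
    rw [hmul] at hk
    have h1 : a + p ≤ r := by omega
    rw [run_step hr hper hla h1]
    exact ih (by omega) (by omega) (by omega)

lemma run_cong {S : List ℕ} {l r p : ℕ} (hr : r < S.length)
    (hper : HasPeriod (Frag S l r) p) {a b : ℕ} (hla : l ≤ a) (har : a ≤ r)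
    (hlb : l ≤ b) (hbr : b ≤ r) (hmod : a ≡ b [MOD p]) : S[a]! = S[b]! := by
  rcases le_total a b with h | h
  · exact run_cong_le hr hper hla h hbr hmod
  · exact (run_cong_le hr hper hlb h har hmod.symm).symm

lemma rev_get! {L : List ℕ} {k : ℕ} (h : k < L.length) :
    L.reverse[k]! = L[L.length - 1 - k]! := by
  rw [getElem!_pos L.reverse k (by simpa using h), getElem!_pos L (L.length - 1 - k) (by omega),
    List.getElem_reverse]

lemma pal_sym {S : List ℕ} {x y : ℕ} (hP : IsPalFrag S x y) {k : ℕ} (hk : k ≤ y - x) :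
    S[x + k]! = S[y - k]! := by
  obtain ⟨hxy, hy, hrev⟩ := hP
  have h1 : k < (Frag S x y).length := by rw [frag_length hy]; omega
  have h := congrArg (fun L => L[k]!) hrev
  rw [rev_get! h1] at h
  rw [frag_length hy] at h
  rw [frag_get hy (by omega), frag_get hy (by omega)] at h
  have e1 : x + (y + 1 - x - 1 - k) = y - k := by omega
  rw [e1] at h
  exact h.symm

lemma pal_of_sym {S : List ℕ} {u v : ℕ} (huv : u ≤ v) (hv : v < S.length)
    (h : ∀ k, k ≤ v - u → S[u + k]! = S[v - k]!) : IsPalFrag S u v := by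
  refine ⟨huv, hv, ?_⟩
  have hlen : (Frag S u v).length = v + 1 - u := frag_length hv
  apply List.ext_getElem (by simp)
  intro k h1 h2
  have h3 : (Frag S u v).length - 1 - k < (Frag S u v).length := by omega
  rw [List.getElem_reverse]
  rw [← getElem!_pos (Frag S u v) _ h3, ← getElem!_pos (Frag S u v) k h2]
  rw [hlen] at h2 h3 ⊢
  rw [frag_get hv (by omega), frag_get hv (by omega)]
  have e1 : u + (v + 1 - u - 1 - k) = v - k := by omega
  rw [e1]
  exact (h k (by omega)).symm

lemma key_s14 {S : List ℕ} {l r x y p : ℕ} (hr : r < S.length)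
    (hper : HasPeriod (Frag S l r) p)
    (hP : IsPalFrag S x y) (hlx : l ≤ x) (hyr : y ≤ r) (hplt : p < y - x + 1)
    {a b : ℕ} (hla : l ≤ a) (har : a ≤ r) (hlb : l ≤ b) (hbr : b ≤ r)
    (hab : a + b ≡ x + y [MOD p]) : S[a]! = S[b]! := by
  have hp := hper.1
  have hxy := hP.1
  -- j in [x, x+p-1] with j ≡ a [MOD p]
  set j := x + (a + p * x - x) % p with hj
  have hjx : x ≤ j := by omega
  have hjy : j ≤ y := by
    have : (a + p * x - x) % p < p := Nat.mod_lt _ hp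
    omega
  have hja : j ≡ a [MOD p] := by
    have h1 : j ≡ x + (a + p * x - x) [MOD p] := Nat.ModEq.add_left x (Nat.mod_modEq _ p)
    have h2 : x + (a + p * x - x) = a + p * x := by
      have : x ≤ p * x := Nat.le_mul_of_pos_left x hp
      omega
    rw [h2] at h1
    calc j ≡ a + p * x [MOD p] := h1
      _ ≡ a + 0 [MOD p] := Nat.ModEq.add_left a (Nat.modEq_zero_iff_dvd.mpr ⟨x, rfl⟩)
      _ = a := by omega
  have hstep1 : S[a]! = S[j]! := run_cong hr hper hla har (by omega) (by omega) hja.symm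
  have hstep2 : S[j]! = S[x + y - j]! := by
    have := pal_sym hP (k := j - x) (by omega)
    have e1 : x + (j - x) = j := by omega
    have e2 : y - (j - x) = x + y - j := by omega
    rw [e1, e2] at this
    exact this
  have hstep3 : S[x + y - j]! = S[b]! := by
    apply run_cong hr hper (by omega) (by omega) hlb hbr
    have h1 : (x + y - j) + j = x + y := by omega
    have h2 : b + j ≡ b + a [MOD p] := Nat.ModEq.add_left b hja
    have h3 : b + a ≡ x + y [MOD p] := by rw [Nat.add_comm b a]; exact hab
    have h4 : (x + y - j) + j ≡ b + j [MOD p] := by rw [h1]; exact (h2.trans h3).symm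
    exact Nat.ModEq.add_right_cancel' j h4
  rw [hstep1, hstep2, hstep3]

/-- Let `S[l..r]` be a fragment with period `p ≤ r - l + 1` that is maximally periodic,
i.e., `l = 0` or `S[l-1] ≠ S[l-1+p]`, and `r = n-1` or `S[r+1] ≠ S[r+1-p]`. Let
`P = S[x..y]` be a palindromic fragment with period `p` satisfying `l ≤ x`, `y ≤ r` and
`p < y - x + 1`. If `x - l ≠ r - y`, then the maximal palindrome of `S` with center
`(x+y)/2` has length `(y - x + 1) + 2·min(x - l, r - y)`. -/
theorem stmt14 (S : List ℕ) (l r x y p : ℕ)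
    (hlr : l ≤ r) (hr : r < S.length)
    (hper : HasPeriod (Frag S l r) p) (hple : p ≤ r - l + 1)
    (hmaxl : l = 0 ∨ S[l - 1]! ≠ S[l - 1 + p]!)
    (hmaxr : r = S.length - 1 ∨ S[r + 1]! ≠ S[r + 1 - p]!)
    (hP : IsPalFrag S x y) (hPper : HasPeriod (Frag S x y) p)
    (hlx : l ≤ x) (hyr : y ≤ r) (hplt : p < y - x + 1)
    (hne : x - l ≠ r - y) :
    ∃ u v, IsMaxPal S u v ∧ u + v = x + y ∧
      v - u + 1 = (y - x + 1) + 2 * min (x - l) (r - y) := by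
  have hp := hper.1
  have hxy := hP.1
  set m := min (x - l) (r - y) with hm
  have hm1 : m ≤ x - l := min_le_left _ _
  have hm2 : m ≤ r - y := min_le_right _ _
  refine ⟨x - m, y + m, ⟨?_, ?_⟩, by omega, by omega⟩
  · -- palindromicity
    apply pal_of_sym (by omega) (by omega)
    intro k hk
    apply key_s14 hr hper hP hlx hyr hplt (by omega) (by omega) (by omega) (by omega)
    have e : (x - m + k) + (y + m - k) = x + y := by omega
    rw [e]
  · -- maximality
    intro i' j' hsum hlt hpal'
    have hij' := hpal'.1
    have hj'len := hpal'.2.1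
    have hext : S[x - m - 1]! = S[y + m + 1]! := by
      have h := pal_sym hpal' (k := x - m - 1 - i') (by omega)
      have e1 : i' + (x - m - 1 - i') = x - m - 1 := by omega
      have e2 : j' - (x - m - 1 - i') = y + m + 1 := by omega
      rw [e1, e2] at h
      exact h
    rcases Nat.lt_or_ge (x - l) (r - y) with hcase | hcase
    · -- m = x - l, left boundary hit
      have hmx : m = x - l := by omega
      rcases hmaxl with h0 | hne1
      · omega
      · apply hne1
        have e1 : x - m - 1 = l - 1 := by omega
        rw [e1] at hext
        rw [hext]
        apply key_s14 hr hper hP hlx hyr hplt (by omega) (by omega) (by omega) (by omega)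
        have e : (y + m + 1) + (l - 1 + p) = (x + y) + p := by omega
        show _ % p = _ % p
        rw [e, Nat.add_mod_right]
    · -- m = r - y, right boundary hit
      have hmy : m = r - y := by omega
      rcases hmaxr with h0 | hne1
      · omega
      · apply hne1
        have e1 : y + m + 1 = r + 1 := by omega
        rw [e1] at hext
        rw [← hext]
        apply key_s14 hr hper hP hlx hyr hplt (by omega) (by omega) (by omega) (by omega)
        have e : (x + y) = ((x - m - 1) + (r + 1 - p)) + p := by omega
        show _ % p = _ % p
        rw [e, Nat.add_mod_right]
end
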